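/- arXiv:1303.2564 — 2 statements merged into one kernel-verified Lean document; each statement's English description precedes it below -/
import Mathlib

section
/- Let G be a finite simple graph of order n ≥ 1, and let H be a finite simple graph with p vertices and q edges such that α(H) = 2. Then the independence polynomial I(G∘H;x) is symmetric if and only if p(p−1)/2 − q = 1, i.e., if and only if H is isomorphic to K_p − e, the complete graph on p vertices with one edge removed. -/
open Polynomial Finset
open scoped Classical

/-- A set of vertices is independent if its elements are pairwise non-adjacent. -/
def IsIndepSet {V : Type*} (G : SimpleGraph V) (s : Finset V) : Prop :=
  ∀ u ∈ s, ∀ v ∈ s, u ≠ v → ¬ G.Adj u v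

/-- The independence number: maximum cardinality of an independent set. -/
noncomputable def indepNum {V : Type*} [Fintype V] (G : SimpleGraph V) : ℕ :=
  (Finset.univ.filter (fun s : Finset V => IsIndepSet G s)).sup Finset.card

/-- The number of independent sets of cardinality `k`. -/
noncomputable def indepCount {V : Type*} [Fintype V] (G : SimpleGraph V) (k : ℕ) : ℕ :=
  (Finset.univ.filter (fun s : Finset V => IsIndepSet G s ∧ s.card = k)).card

/-- The independence polynomial `I(G;x) = ∑ s_k x^k`. -/
noncomputable def indepPoly {V : Type*} [Fintype V] (G : SimpleGraph V) : Polynomial ℝ :=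
  ∑ k ∈ Finset.range (indepNum G + 1), Polynomial.C (indepCount G k : ℝ) * Polynomial.X ^ k

/-- The corona `G ∘ H`: take `G` together with `|V(G)|` disjoint copies of `H`,
joining each vertex `v` of `G` to all vertices of the `v`-th copy of `H`. -/
def corona {V W : Type*} (G : SimpleGraph V) (H : SimpleGraph W) :
    SimpleGraph (V ⊕ V × W) where
  Adj x y :=
    match x, y with
    | Sum.inl u, Sum.inl v => G.Adj u v
    | Sum.inl u, Sum.inr (v, _) => u = v
    | Sum.inr (v, _), Sum.inl u => u = v
    | Sum.inr (v, w), Sum.inr (v', w') => v = v' ∧ H.Adj w w'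
  symm := by
    constructor
    rintro (u | ⟨v, w⟩) (u' | ⟨v', w'⟩) h
    · exact G.adj_symm h
    · exact h
    · exact h
    · exact ⟨h.1.symm, H.adj_symm h.2⟩
  loopless := by
    constructor
    rintro (u | ⟨v, w⟩) h
    · exact G.irrefl h
    · exact H.irrefl h.2

/-- The disjoint union of two graphs. -/
def disjUnion {V W : Type*} (G : SimpleGraph V) (H : SimpleGraph W) :
    SimpleGraph (V ⊕ W) where
  Adj x y :=
    match x, y with
    | Sum.inl a, Sum.inl b => G.Adj a b
    | Sum.inr a, Sum.inr b => H.Adj a b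
    | _, _ => False
  symm := by
    constructor
    rintro (a | a) (b | b) h
    · exact G.adj_symm h
    · exact h.elim
    · exact h.elim
    · exact H.adj_symm h
  loopless := by
    constructor
    rintro (a | a) h
    · exact G.irrefl h
    · exact H.irrefl h

/-- The Zykov sum (join) of two graphs. -/
def zykovSum {V W : Type*} (G : SimpleGraph V) (H : SimpleGraph W) :
    SimpleGraph (V ⊕ W) where
  Adj x y :=
    match x, y with
    | Sum.inl a, Sum.inl b => G.Adj a b
    | Sum.inr a, Sum.inr b => H.Adj a b
    | _, _ => True
  symm := by
    constructor
    rintro (a | a) (b | b) h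
    · exact G.adj_symm h
    · trivial
    · trivial
    · exact H.adj_symm h
  loopless := by
    constructor
    rintro (a | a) h
    · exact G.irrefl h
    · exact H.irrefl h

/-- `K_p - e`: the complete graph on `Fin p` minus the edge joining vertices `0` and `1`. -/
def completeMinusEdge (p : ℕ) : SimpleGraph (Fin p) where
  Adj a b := a ≠ b ∧ ¬(a.val ≤ 1 ∧ b.val ≤ 1)
  symm := ⟨fun a b ⟨h1, h2⟩ => ⟨h1.symm, fun ⟨hb, ha⟩ => h2 ⟨ha, hb⟩⟩⟩
  loopless := ⟨fun a ⟨h, _⟩ => h rfl⟩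

/-- The clique number of a graph. -/
noncomputable def cliqueNum {V : Type*} [Fintype V] (G : SimpleGraph V) : ℕ :=
  (Finset.univ.filter (fun s : Finset V => G.IsClique ↑s)).sup Finset.card

/-- A graph is perfect if every induced subgraph has chromatic number
equal to its clique number. -/
def IsPerfect {V : Type*} [Fintype V] (G : SimpleGraph V) : Prop :=
  ∀ s : Set V, (G.induce s).chromaticNumber = (cliqueNum (G.induce s) : ℕ∞)

/-- The coefficient sequence `(a_0, …, a_n)` of a polynomial (indexed up to its
degree `n`) is symmetric, i.e. `a_i = a_{n-i}`. -/
def CoeffSymmetric (P : Polynomial ℝ) : Prop :=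
  ∀ i ≤ P.natDegree, P.coeff i = P.coeff (P.natDegree - i)

/-- The coefficient sequence of a polynomial is unimodal with mode `k`. -/
def IsMode (P : Polynomial ℝ) (k : ℕ) : Prop :=
  k ≤ P.natDegree ∧ (∀ i, i < k → P.coeff i ≤ P.coeff (i + 1)) ∧
    (∀ i, k ≤ i → i < P.natDegree → P.coeff (i + 1) ≤ P.coeff i)

/-- The coefficient sequence of a polynomial is unimodal. -/
def CoeffUnimodal (P : Polynomial ℝ) : Prop :=
  ∃ k, IsMode P k

/-- `k` is the unique index achieving the maximal coefficient of `P`. -/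
def IsUniqueMode (P : Polynomial ℝ) (k : ℕ) : Prop :=
  k ≤ P.natDegree ∧ ∀ j ≤ P.natDegree, j ≠ k → P.coeff j < P.coeff k

/-- The polynomial has a unique mode. -/
def HasUniqueMode (P : Polynomial ℝ) : Prop :=
  ∃ k, IsUniqueMode P k

/-!
Let `n = |V(G)|` and let `r` be the number of independent pairs of `H`. An independent set of
`G ∘ H` meets each vertex `v` of `G` together with its copy of `H` either in `{v}` or in an
independent set of `H`, hence in at most `α(H) = 2` vertices; so `α(G ∘ H) = 2n`, and choosing
the same independent pair of `H` in every copy gives `r` distinct independent sets of size `2n`.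
Symmetry forces `s_{2n} = s_0 = 1`, hence `r = 1`. Conversely, if `P` is the only independent
pair of `H`, exchanging `∅` and `P` in every copy whose vertex of `G` is not taken is an
involution on the independent sets of `G ∘ H` turning size `k` into `2n - k`.
Independent pairs of `H` are the edges of `Hᶜ`, so `r = p(p-1)/2 - q`, and `r = 1` says that
`Hᶜ` is a single edge, i.e. `H ≅ K_p - e`.
-/

section IndepSet

variable {W : Type*} {H : SimpleGraph W}

theorem isIndepSet_pair_iff {a b : W} : IsIndepSet H {a, b} ↔ ¬H.Adj a b := by
  refine ⟨fun h hab => h a (by simp) b (by simp) hab.ne hab, fun h u hu v hv huv => ?_⟩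
  simp only [mem_insert, mem_singleton] at hu hv
  rcases hu with rfl | rfl <;> rcases hv with rfl | rfl
  exacts [absurd rfl huv, h, fun h' => h h'.symm, absurd rfl huv]

theorem IsIndepSet.swap_empty {P s : Finset W} (hP : IsIndepSet H P) (hs : IsIndepSet H s) :
    IsIndepSet H (Equiv.swap ∅ P s) := by
  rw [Equiv.swap_apply_def]
  split_ifs
  exacts [hP, by simp [IsIndepSet], hs]

variable [Fintype W]

theorem IsIndepSet.card_le_indepNum {s : Finset W} (hs : IsIndepSet H s) : #s ≤ indepNum H :=
  le_sup (mem_filter.2 ⟨mem_univ _, hs⟩)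

theorem exists_isIndepSet_card_eq_indepNum (H : SimpleGraph W) :
    ∃ s, IsIndepSet H s ∧ #s = indepNum H := by
  obtain ⟨s, hs, h⟩ := exists_mem_eq_sup (univ.filter (IsIndepSet H))
    ⟨∅, by simp [IsIndepSet]⟩ card
  exact ⟨s, (mem_filter.1 hs).2, h.symm⟩

theorem indepCount_indepNum_pos (H : SimpleGraph W) : 0 < indepCount H (indepNum H) := by
  obtain ⟨s, hs, hcard⟩ := exists_isIndepSet_card_eq_indepNum H
  exact card_pos.2 ⟨s, mem_filter.2 ⟨mem_univ _, hs, hcard⟩⟩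

theorem indepNum_le_card (H : SimpleGraph W) : indepNum H ≤ Fintype.card W :=
  Finset.sup_le fun s _ => card_le_univ s

theorem indepCount_zero (H : SimpleGraph W) : indepCount H 0 = 1 := by
  rw [indepCount, card_eq_one]
  exact ⟨∅, by ext s; simp +contextual [IsIndepSet]⟩

theorem indepCount_two_eq_card_edgeFinset_compl (H : SimpleGraph W) :
    indepCount H 2 = #Hᶜ.edgeFinset := by
  refine (card_bij (fun e _ => e.toFinset) ?_ ?_ ?_).symm
  · intro e he
    induction e with | h a b => ?_
    rw [SimpleGraph.mem_edgeFinset, SimpleGraph.mem_edgeSet, SimpleGraph.compl_adj] at he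
    simp [Sym2.toFinset_mk_eq, isIndepSet_pair_iff, card_pair he.1, he.2]
  · exact fun e _ e' _ h => Sym2.ext fun x => by rw [← Sym2.mem_toFinset, h, Sym2.mem_toFinset]
  · intro s hs
    obtain ⟨hind, hcard⟩ := (mem_filter.1 hs).2
    obtain ⟨a, b, hab, rfl⟩ := card_eq_two.1 hcard
    exact ⟨s(a, b), by simpa [SimpleGraph.compl_adj, hab] using isIndepSet_pair_iff.1 hind,
      Sym2.toFinset_mk_eq⟩

theorem card_edgeFinset_add_card_edgeFinset_compl (H : SimpleGraph W) :
    #H.edgeFinset + #Hᶜ.edgeFinset = (Fintype.card W).choose 2 := by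
  rw [← card_union_of_disjoint (SimpleGraph.disjoint_edgeFinset.2 disjoint_compl_right),
    ← SimpleGraph.card_edgeFinset_top_eq_card_choose_two]
  congr 1
  ext e
  induction e with | h a b => by_cases H.Adj a b <;> simp [*, SimpleGraph.compl_adj, H.ne_of_adj]

theorem card_swap_empty_add_card (hH : indepNum H = 2) {P : Finset W}
    (hP : ∀ s, IsIndepSet H s ∧ #s = 2 ↔ s = P) {s : Finset W} (hs : IsIndepSet H s) :
    #(Equiv.swap ∅ P s) + #s = 2 := by
  have hPcard : #P = 2 := ((hP P).2 rfl).2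
  rw [Equiv.swap_apply_def]
  split_ifs with hempty hpair
  · simp [hempty, hPcard]
  · simp [hpair, hPcard]
  · have hle := hs.card_le_indepNum
    have hne0 : #s ≠ 0 := card_ne_zero.2 (nonempty_iff_ne_empty.2 hempty)
    have hne2 : #s ≠ 2 := fun h => hpair ((hP s).1 ⟨hs, h⟩)
    omega

end IndepSet

theorem Int.natCast_choose_two (p : ℕ) : (p.choose 2 : ℤ) = p * (p - 1) / 2 := by
  rw [Nat.choose_two_right]
  rcases p with _ | p
  · simp
  · push_cast
    ring_nf

theorem Equiv.exists_apply_eq_and_apply_eq {α β : Type*} (e : α ≃ β) {a b : α}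
    (hab : a ≠ b) {c d : β} (hcd : c ≠ d) : ∃ f : α ≃ β, f a = c ∧ f b = d := by
  set σ := Equiv.swap (e a) c
  have hσb : σ (e b) ≠ c := by
    rw [← Equiv.swap_apply_left (e a) c]
    exact σ.injective.ne (e.injective.ne hab.symm)
  refine ⟨(e.trans σ).trans (Equiv.swap (σ (e b)) d), ?_, Equiv.swap_apply_left _ _⟩
  simp [σ, Equiv.swap_apply_of_ne_of_ne hσb.symm hcd]

namespace SimpleGraph

variable {α β : Type*} {G : SimpleGraph α} {G' : SimpleGraph β}

def Iso.compl (φ : G ≃g G') : Gᶜ ≃g G'ᶜ :=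
  ⟨φ.toEquiv, by simp [compl_adj, φ.map_adj_iff]⟩

theorem nonempty_iso_compl_iff : Nonempty (G ≃g G'ᶜ) ↔ Nonempty (Gᶜ ≃g G') :=
  ⟨fun ⟨φ⟩ => compl_compl G' ▸ ⟨φ.compl⟩,
    fun ⟨φ⟩ => compl_compl G ▸ ⟨φ.compl⟩⟩

theorem card_edgeFinset_eq_one_iff_nonempty_iso_edge [Fintype α] [Fintype β]
    (G : SimpleGraph α) [Fintype G.edgeSet] {c d : β} (hcd : c ≠ d)
    (hcard : Fintype.card α = Fintype.card β) :
    #G.edgeFinset = 1 ↔ Nonempty (G ≃g edge c d) := by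
  constructor
  · intro h
    obtain ⟨e, he⟩ := card_eq_one.1 h
    induction e with | h a b => ?_
    have hab : G.Adj a b := by simpa using he.symm.subset (mem_singleton_self _)
    have hG : G = edge a b := by
      rw [← edgeFinset_inj, he]
      simp [edgeFinset, edgeSet_edge_of_ne hab.ne]
    obtain ⟨f, rfl, rfl⟩ :=
      (Fintype.equivOfCardEq hcard).exists_apply_eq_and_apply_eq hab.ne hcd
    subst hG
    exact ⟨⟨f, by simp [edge_adj]⟩⟩
  · rintro ⟨φ⟩
    rw [φ.card_edgeFinset_eq]
    simp [edgeFinset, edgeSet_edge_of_ne hcd]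

end SimpleGraph

theorem compl_completeMinusEdge {p : ℕ} (hp : 2 ≤ p) :
    (completeMinusEdge p)ᶜ = SimpleGraph.edge ⟨0, by omega⟩ ⟨1, by omega⟩ := by
  ext a b
  simp [completeMinusEdge, SimpleGraph.compl_adj, SimpleGraph.edge_adj, Fin.ext_iff]
  omega

theorem nonempty_iso_completeMinusEdge_iff {W : Type*} [Fintype W] {H : SimpleGraph W} {p : ℕ}
    (hp : Fintype.card W = p) (hp2 : 2 ≤ p) :
    Nonempty (H ≃g completeMinusEdge p) ↔ #Hᶜ.edgeFinset = 1 := by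
  rw [← compl_compl (completeMinusEdge p), compl_completeMinusEdge hp2,
    SimpleGraph.nonempty_iso_compl_iff]
  have hcard : Fintype.card W = Fintype.card (Fin p) := by rw [hp, Fintype.card_fin]
  have h01 : (⟨0, by omega⟩ : Fin p) ≠ ⟨1, by omega⟩ := by simp
  exact (SimpleGraph.card_edgeFinset_eq_one_iff_nonempty_iso_edge Hᶜ h01 hcard).symm

namespace Corona

variable {V W : Type*} {G : SimpleGraph V} {H : SimpleGraph W}

noncomputable def fiber (S : Finset (V ⊕ V × W)) (v : V) : Finset W :=
  (S.toRight.filter (·.1 = v)).image Prod.snd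

@[simp]
theorem mem_fiber {S : Finset (V ⊕ V × W)} {v : V} {w : W} :
    w ∈ fiber S v ↔ Sum.inr (v, w) ∈ S := by
  simp [fiber]

theorem card_fiber (S : Finset (V ⊕ V × W)) (v : V) :
    #(fiber S v) = #(S.toRight.filter (·.1 = v)) :=
  card_image_of_injOn fun _ hx _ hy h =>
    Prod.ext ((mem_filter.1 hx).2.trans (mem_filter.1 hy).2.symm) h

theorem ext_fiber {S T : Finset (V ⊕ V × W)} (hinl : ∀ v, Sum.inl v ∈ S ↔ Sum.inl v ∈ T)
    (hfib : ∀ v, fiber S v = fiber T v) : S = T := by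
  ext (v | ⟨v, w⟩)
  · exact hinl v
  · rw [← mem_fiber, ← mem_fiber, hfib]

theorem isIndepSet_corona_iff {S : Finset (V ⊕ V × W)} :
    IsIndepSet (corona G H) S ↔ IsIndepSet G S.toLeft ∧
      ∀ v, IsIndepSet H (fiber S v) ∧ (Sum.inl v ∈ S → fiber S v = ∅) := by
  constructor
  · intro hS
    refine ⟨fun u hu u' hu' hne => hS _ (mem_toLeft.1 hu) _ (mem_toLeft.1 hu') (by simpa),
      fun v => ⟨fun w hw w' hw' hne hadj => ?_,
        fun hv => eq_empty_of_forall_notMem fun w hw => ?_⟩⟩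
    · exact hS _ (mem_fiber.1 hw) _ (mem_fiber.1 hw') (by simpa) ⟨rfl, hadj⟩
    · exact hS _ hv _ (mem_fiber.1 hw) (by simp) rfl
  · rintro ⟨hleft, hfib⟩ (u | ⟨v, w⟩) hx (u' | ⟨v', w'⟩) hy hne hadj
    · exact hleft u (mem_toLeft.2 hx) u' (mem_toLeft.2 hy) (by simpa using hne) hadj
    · obtain rfl : u = v' := hadj
      simpa [(hfib u).2 hx] using mem_fiber.2 hy
    · obtain rfl : u' = v := hadj
      simpa [(hfib u').2 hy] using mem_fiber.2 hx
    · obtain ⟨rfl, hadj⟩ := hadj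
      exact (hfib v).1 w (mem_fiber.2 hx) w' (mem_fiber.2 hy) hadj.ne hadj

variable [Fintype V]

theorem card_eq_sum_fiber (S : Finset (V ⊕ V × W)) :
    #S = ∑ v, ((if Sum.inl v ∈ S then 1 else 0) + #(fiber S v)) := by
  rw [sum_add_distrib, ← card_toLeft_add_card_toRight, sum_boole,
    card_eq_sum_card_fiberwise (f := Prod.fst) (t := univ) (fun _ _ => mem_univ _)]
  simp only [card_fiber, Nat.cast_id]
  congr 2
  ext v
  simp

noncomputable def copies (P : Finset W) : Finset (V ⊕ V × W) :=
  (univ ×ˢ P).map Function.Embedding.inr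

@[simp]
theorem inl_notMem_copies {P : Finset W} {v : V} : Sum.inl v ∉ copies P := by
  simp [copies]

@[simp]
theorem fiber_copies (P : Finset W) (v : V) : fiber (copies P) v = P := by
  ext w
  simp [copies]

theorem card_copies (P : Finset W) :
    #(copies P : Finset (V ⊕ V × W)) = Fintype.card V * #P := by
  simp [copies]

theorem IsIndepSet.copies {P : Finset W} (hP : IsIndepSet H P) :
    IsIndepSet (corona G H) (copies P) := by
  refine isIndepSet_corona_iff.2 ⟨fun u hu => ?_, fun v => ⟨by simpa using hP, by simp⟩⟩
  simp [mem_toLeft] at hu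

theorem copies_injective [Nonempty V] :
    Function.Injective (copies : Finset W → Finset (V ⊕ V × W)) :=
  fun P Q h => by simpa using congrArg (fiber · (Classical.arbitrary V)) h

variable [Fintype W]

theorem card_le_of_isIndepSet (hH : 1 ≤ indepNum H)
    {S : Finset (V ⊕ V × W)} (hS : IsIndepSet (corona G H) S) :
    #S ≤ Fintype.card V * indepNum H := by
  rw [card_eq_sum_fiber, ← smul_eq_mul, ← card_univ, ← sum_const]
  refine sum_le_sum fun v _ => ?_
  obtain ⟨hfib, hempty⟩ := (isIndepSet_corona_iff.1 hS).2 v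
  by_cases hv : Sum.inl v ∈ S
  · simpa [hv, hempty hv] using hH
  · simpa [hv] using hfib.card_le_indepNum

noncomputable def pairSwap (P : Finset W) (S : Finset (V ⊕ V × W)) : Finset (V ⊕ V × W) :=
  univ.filter (Sum.elim (Sum.inl · ∈ S)
    fun x => Sum.inl x.1 ∉ S ∧ x.2 ∈ Equiv.swap ∅ P (fiber S x.1))

@[simp]
theorem inl_mem_pairSwap {P : Finset W} {S : Finset (V ⊕ V × W)} {v : V} :
    Sum.inl v ∈ pairSwap P S ↔ Sum.inl v ∈ S := by
  simp [pairSwap]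

theorem fiber_pairSwap (P : Finset W) (S : Finset (V ⊕ V × W)) (v : V) :
    fiber (pairSwap P S) v = if Sum.inl v ∈ S then ∅ else Equiv.swap ∅ P (fiber S v) := by
  ext w
  by_cases hv : Sum.inl v ∈ S <;> simp [pairSwap, hv]

theorem IsIndepSet.pairSwap {S : Finset (V ⊕ V × W)} (hS : IsIndepSet (corona G H) S)
    {P : Finset W} (hP : IsIndepSet H P) : IsIndepSet (corona G H) (pairSwap P S) := by
  obtain ⟨hleft, hfib⟩ := isIndepSet_corona_iff.1 hS
  refine isIndepSet_corona_iff.2 ⟨by convert hleft using 1; ext; simp, fun v => ?_⟩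
  by_cases hv : Sum.inl v ∈ S
  · simp [fiber_pairSwap, hv, IsIndepSet]
  · simp [fiber_pairSwap, hv, hP.swap_empty (hfib v).1]

theorem pairSwap_pairSwap (P : Finset W) {S : Finset (V ⊕ V × W)}
    (hS : IsIndepSet (corona G H) S) : pairSwap P (pairSwap P S) = S := by
  refine ext_fiber (by simp) fun v => ?_
  by_cases hv : Sum.inl v ∈ S
  · simp [fiber_pairSwap, hv, ((isIndepSet_corona_iff.1 hS).2 v).2 hv]
  · simp [fiber_pairSwap, hv]

theorem card_add_card_pairSwap (hH : indepNum H = 2) {P : Finset W}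
    (hP : ∀ s, IsIndepSet H s ∧ #s = 2 ↔ s = P) {S : Finset (V ⊕ V × W)}
    (hS : IsIndepSet (corona G H) S) :
    #S + #(pairSwap P S) = Fintype.card V * 2 := by
  rw [card_eq_sum_fiber, card_eq_sum_fiber, ← sum_add_distrib, ← smul_eq_mul, ← card_univ,
    ← sum_const]
  refine sum_congr rfl fun v _ => ?_
  obtain ⟨hfib, hempty⟩ := (isIndepSet_corona_iff.1 hS).2 v
  by_cases hv : Sum.inl v ∈ S
  · simp [fiber_pairSwap, hv, hempty hv]
  · have := card_swap_empty_add_card hH hP hfib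
    simp only [hv, inl_mem_pairSwap, fiber_pairSwap, if_false]
    omega

end Corona

open Corona

section CoronaIndepCount

variable {V W : Type*} [Fintype V] [Fintype W] {G : SimpleGraph V} {H : SimpleGraph W}

theorem indepNum_corona (hH : 1 ≤ indepNum H) :
    indepNum (corona G H) = Fintype.card V * indepNum H := by
  obtain ⟨P, hP, hPcard⟩ := exists_isIndepSet_card_eq_indepNum H
  refine le_antisymm (Finset.sup_le fun S hS => card_le_of_isIndepSet hH (mem_filter.1 hS).2) ?_
  simpa [card_copies, hPcard] using (hP.copies (G := G)).card_le_indepNum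

theorem indepCount_le_indepCount_corona [Nonempty V] (k : ℕ) :
    indepCount H k ≤ indepCount (corona G H) (Fintype.card V * k) := by
  refine card_le_card_of_injOn copies (fun P hP => ?_) copies_injective.injOn
  obtain ⟨hind, hcard⟩ := (mem_filter.1 hP).2
  simp [hind.copies, card_copies, hcard]

theorem indepCount_corona_eq_indepCount_sub (hH : indepNum H = 2) (hr : indepCount H 2 = 1)
    {i : ℕ} (hi : i ≤ Fintype.card V * 2) :
    indepCount (corona G H) i = indepCount (corona G H) (Fintype.card V * 2 - i) := by
  obtain ⟨P, hPeq⟩ := card_eq_one.1 hr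
  have hP : ∀ s, IsIndepSet H s ∧ #s = 2 ↔ s = P := fun s => by
    simpa using Finset.ext_iff.1 hPeq s
  have hPind : IsIndepSet H P := ((hP P).2 rfl).1
  have hmaps : ∀ {j k : ℕ}, j + k = Fintype.card V * 2 →
      ∀ S ∈ univ.filter (fun S => IsIndepSet (corona G H) S ∧ #S = j),
        pairSwap P S ∈ univ.filter (fun S => IsIndepSet (corona G H) S ∧ #S = k) := by
    intro j k hjk S hS
    obtain ⟨hind, rfl⟩ := (mem_filter.1 hS).2
    have := card_add_card_pairSwap hH hP hind
    exact mem_filter.2 ⟨mem_univ _, hind.pairSwap hPind, by omega⟩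
  exact card_bij' (fun S _ => pairSwap P S) (fun S _ => pairSwap P S) (hmaps (by omega))
    (hmaps (by omega)) (fun S hS => pairSwap_pairSwap P (mem_filter.1 hS).2.1)
    (fun S hS => pairSwap_pairSwap P (mem_filter.1 hS).2.1)

theorem indepCount_corona_symmetric_iff [Nonempty V] (hH : indepNum H = 2) :
    (∀ i ≤ indepNum (corona G H) / 2,
        indepCount (corona G H) i = indepCount (corona G H) (indepNum (corona G H) - i)) ↔
      indepCount H 2 = 1 := by
  rw [indepNum_corona (by omega), hH]
  refine ⟨fun hsym => ?_, fun hr i hi =>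
    indepCount_corona_eq_indepCount_sub hH hr (hi.trans (Nat.div_le_self _ _))⟩
  have hmax := hsym 0 (Nat.zero_le _)
  rw [indepCount_zero, Nat.sub_zero] at hmax
  have hle := indepCount_le_indepCount_corona (G := G) (H := H) 2
  have hpos := hH ▸ indepCount_indepNum_pos H
  omega

end CoronaIndepCount

/-- if `α(H) = 2`, `H` has `p` vertices and `q` edges, then `I(G∘H;x)` is
symmetric iff `p(p-1)/2 - q = 1`, i.e. iff `H ≅ K_p - e`. -/
theorem corona_indepPoly_symmetric_iff {V W : Type*} [Fintype V] [Fintype W]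
    (G : SimpleGraph V) (H : SimpleGraph W) (hn : 1 ≤ Fintype.card V)
    (p q : ℕ) (hp : Fintype.card W = p) (hq : Fintype.card H.edgeSet = q)
    (hH : indepNum H = 2) :
    ((∀ i ≤ indepNum (corona G H) / 2,
        indepCount (corona G H) i =
          indepCount (corona G H) (indepNum (corona G H) - i)) ↔
      (p : ℤ) * ((p : ℤ) - 1) / 2 - (q : ℤ) = 1) ∧
    ((∀ i ≤ indepNum (corona G H) / 2,
        indepCount (corona G H) i =
          indepCount (corona G H) (indepNum (corona G H) - i)) ↔
      Nonempty (H ≃g completeMinusEdge p)) := by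
  have : Nonempty V := Fintype.card_pos_iff.1 hn
  have hp2 : 2 ≤ p := hp ▸ hH ▸ indepNum_le_card H
  have hedges := card_edgeFinset_add_card_edgeFinset_compl H
  rw [SimpleGraph.edgeFinset_card, hq, hp] at hedges
  rw [indepCount_corona_symmetric_iff hH, indepCount_two_eq_card_edgeFinset_compl,
    nonempty_iso_completeMinusEdge_iff hp hp2, ← Int.natCast_choose_two, ← hedges]
  omega
end

section
/- Let G be a finite simple graph of order n ≥ 1 with independence polynomial I(G;x) = Σ_{k=0}^{α(G)} s_k x^k, and let H be any finite simple graph. Then I(G∘H; x) = Σ_{k=0}^{α(G)} s_k · x^k · I(H;x)^{n−k}; equivalently, I(G∘H;x) = I(H;x)^n · I(G; x / I(H;x)) as rational functions. -/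
open Polynomial Finset
open scoped Classical

/-!
An independent set of `G ∘ H` consists of an independent set `A` of `G` together with, over
each vertex `v` of `G`, an independent set of the `v`-th copy of `H`, which must be empty when
`v ∈ A`. Weighting by `x ^ size`, the choices over the vertices are independent of each other,
so the independent sets with `G`-part `A` contribute `x ^ |A| * I(H;x) ^ (n - |A|)`; grouping
the sets `A` by cardinality gives the formula.
-/

section

variable {V W : Type*}

lemma isIndepSet_iff_forall_not_adj (G : SimpleGraph V) (s : Finset V) :
    IsIndepSet G s ↔ ∀ u ∈ s, ∀ v ∈ s, ¬ G.Adj u v :=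
  ⟨fun h u hu v hv huv => h u hu v hv huv.ne huv, fun h u hu v hv _ => h u hu v hv⟩

variable [Fintype V] [Fintype W]

noncomputable def finsetProdEquiv : Finset (V × W) ≃ (V → Finset W) where
  toFun B v := {w | (v, w) ∈ B}
  invFun f := {q | q.2 ∈ f q.1}
  left_inv B := by ext; simp
  right_inv f := by ext; simp

@[simp]
lemma mem_finsetProdEquiv {B : Finset (V × W)} {v : V} {w : W} :
    w ∈ finsetProdEquiv B v ↔ (v, w) ∈ B := by
  simp [finsetProdEquiv]

lemma card_eq_sum_card_finsetProdEquiv (B : Finset (V × W)) :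
    #B = ∑ v, #(finsetProdEquiv B v) := by
  simp only [finsetProdEquiv, Equiv.coe_fn_mk, card_filter]
  rw [← Fintype.sum_prod_type' (fun v w => if (v, w) ∈ B then 1 else 0), ← card_filter,
    filter_mem_eq_inter, univ_inter]

lemma sum_pow_card_eq_prod_sum_fibers {R : Type*} [CommSemiring R] (x : R)
    (P : V → Finset W → Prop) [∀ v, DecidablePred (P v)] :
    ∑ B with ∀ v, P v (finsetProdEquiv B v), x ^ #B = ∏ v, ∑ t with P v t, x ^ #t := by
  rw [prod_univ_sum]
  refine sum_equiv finsetProdEquiv (by simp [Fintype.mem_piFinset]) fun B _ => ?_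
  rw [card_eq_sum_card_finsetProdEquiv, prod_pow_eq_pow_sum]

lemma sum_indepSets_eq_sum_indepCount {M : Type*} [AddCommMonoid M] (G : SimpleGraph V)
    (f : ℕ → M) :
    ∑ s with IsIndepSet G s, f #s = ∑ k ∈ range (indepNum G + 1), indepCount G k • f k := by
  rw [← sum_fiberwise_of_maps_to (g := card) (t := range (indepNum G + 1))
    fun s hs => mem_range_succ_iff.2 (le_sup hs)]
  refine sum_congr rfl fun k _ => ?_
  rw [sum_congr rfl fun s hs => congrArg f (mem_filter.1 hs).2, sum_const, indepCount,
    filter_filter]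

lemma indepPoly_eq_sum_indepSets (G : SimpleGraph V) :
    indepPoly G = ∑ s with IsIndepSet G s, (X : ℝ[X]) ^ #s := by
  rw [sum_indepSets_eq_sum_indepCount, indepPoly]
  simp [nsmul_eq_mul]

lemma isIndepSet_corona_iff (G : SimpleGraph V) (H : SimpleGraph W) (s : Finset (V ⊕ V × W)) :
    IsIndepSet (corona G H) s ↔ IsIndepSet G s.toLeft ∧
      ∀ v, (v ∈ s.toLeft → finsetProdEquiv s.toRight v = ∅) ∧
        IsIndepSet H (finsetProdEquiv s.toRight v) := by
  simp only [isIndepSet_iff_forall_not_adj, eq_empty_iff_forall_notMem, mem_finsetProdEquiv,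
    mem_toLeft, mem_toRight, Sum.forall, Prod.forall, corona]
  grind

lemma prod_sum_fibers_corona (H : SimpleGraph W) (A : Finset V) :
    ∏ v, ∑ t with (v ∈ A → t = ∅) ∧ IsIndepSet H t, (X : ℝ[X]) ^ #t =
      indepPoly H ^ (Fintype.card V - #A) := by
  have hfiber : ∀ v, ∑ t with (v ∈ A → t = ∅) ∧ IsIndepSet H t, (X : ℝ[X]) ^ #t =
      if v ∈ A then 1 else indepPoly H := by
    intro v
    by_cases hv : v ∈ A
    · have hempty : IsIndepSet H ∅ := by simp [IsIndepSet]
      simp only [hv, true_implies, if_true, filter_and, filter_eq', mem_univ]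
      simp [hempty]
    · simp [hv, indepPoly_eq_sum_indepSets]
  rw [prod_congr rfl fun v _ => hfiber v, prod_ite, prod_const_one, one_mul, prod_const,
    filter_not, filter_mem_eq_inter, univ_inter, card_sdiff_of_subset (subset_univ _), card_univ]

theorem indepPoly_corona (G : SimpleGraph V) (H : SimpleGraph W) :
    indepPoly (corona G H) =
      ∑ A with IsIndepSet G A, X ^ #A * indepPoly H ^ (Fintype.card V - #A) := by
  let Fibered (A : Finset V) (B : Finset (V × W)) : Prop :=
    ∀ v, (v ∈ A → finsetProdEquiv B v = ∅) ∧ IsIndepSet H (finsetProdEquiv B v)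
  calc indepPoly (corona G H)
      = ∑ p : Finset V × Finset (V × W) with IsIndepSet G p.1 ∧ Fibered p.1 p.2,
          (X : ℝ[X]) ^ #p.1 * X ^ #p.2 := by
        rw [indepPoly_eq_sum_indepSets]
        refine sum_equiv sumEquiv.toEquiv (fun s => ?_) fun s _ => ?_
        · simp [isIndepSet_corona_iff, Fibered]
        · simp [← pow_add, card_toLeft_add_card_toRight]
    _ = ∑ A with IsIndepSet G A, X ^ #A * ∑ B with Fibered A B, (X : ℝ[X]) ^ #B := by
        simp_rw [mul_sum]
        exact sum_finset_product' (f := fun A B => (X : ℝ[X]) ^ #A * X ^ #B) _ _ _ fun p => by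
          simp
    _ = _ := by
        refine sum_congr rfl fun A _ => congrArg (X ^ #A * ·) ?_
        exact (sum_pow_card_eq_prod_sum_fibers X
          fun v t => (v ∈ A → t = ∅) ∧ IsIndepSet H t).trans (prod_sum_fibers_corona H A)

end

theorem corona_indepPoly_formula_general {V W : Type*} [Fintype V] [Fintype W]
    (G : SimpleGraph V) (H : SimpleGraph W) (n : ℕ) (hn : Fintype.card V = n) :
    (indepPoly (corona G H) =
        ∑ k ∈ Finset.range (indepNum G + 1),
          Polynomial.C (indepCount G k : ℝ) * Polynomial.X ^ k *
            indepPoly H ^ (n - k)) ∧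
      (∀ x : ℝ, (indepPoly H).eval x ≠ 0 →
        (indepPoly (corona G H)).eval x =
          ((indepPoly H).eval x) ^ n *
            (indepPoly G).eval (x / (indepPoly H).eval x)) := by
  subst hn
  refine ⟨?_, fun x hx => ?_⟩
  · rw [indepPoly_corona,
      sum_indepSets_eq_sum_indepCount G fun k => X ^ k * indepPoly H ^ (Fintype.card V - k)]
    simp [nsmul_eq_mul, mul_assoc]
  · rw [indepPoly_corona, indepPoly_eq_sum_indepSets G, eval_finsetSum, eval_finsetSum, mul_sum]
    refine sum_congr rfl fun A _ => ?_
    have hA : #A ≤ Fintype.card V := card_le_univ A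
    simp only [eval_mul, eval_pow, eval_X, div_pow]
    field_simp
    rw [mul_assoc, pow_sub_mul_pow _ hA]

/-- Gutman's formula:
`I(G∘H; x) = Σ_{k=0}^{α(G)} s_k x^k I(H;x)^{n-k}`, equivalently
`I(G∘H;x) = I(H;x)ⁿ · I(G; x / I(H;x))` wherever `I(H;x) ≠ 0`. -/
theorem corona_indepPoly_formula {V W : Type*} [Fintype V] [Fintype W]
    (G : SimpleGraph V) (H : SimpleGraph W) (n : ℕ) (hn : Fintype.card V = n)
    (hn1 : 1 ≤ n) :
    (indepPoly (corona G H) =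
        ∑ k ∈ Finset.range (indepNum G + 1),
          Polynomial.C (indepCount G k : ℝ) * Polynomial.X ^ k *
            indepPoly H ^ (n - k)) ∧
      (∀ x : ℝ, (indepPoly H).eval x ≠ 0 →
        (indepPoly (corona G H)).eval x =
          ((indepPoly H).eval x) ^ n *
            (indepPoly G).eval (x / (indepPoly H).eval x)) :=
  corona_indepPoly_formula_general G H n hn
end
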